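/- For n ≥ 1, ∑_{k=0}^n C(n,k) * (-1)^{k-1} * H k² / k = H n * H n^{(2)} - ∑_{m=0}^{n-1} H m^{(2)} / (n-m), where H n = ∑_{j=1}^n 1/j and H n^{(2)} = ∑_{j=1}^n 1/j², with the k=0 term of the left sum interpreted as 0. -/

import Mathlib

/-!
With `B f n = ∑ k ≤ n, (-1)^k C(n,k) f k`, the left side is `-B (H k² / k) n`. Pascal's rule
gives `B f (n+1) = B f n - B (f ∘ succ) n`, and absorption `C(n,k)/(k+1) = C(n+1,k+1)/(n+1)`
turns the increment into `-B (H²) (n+1) / (n+1)`. The same two rules give `B (1/k) = -H`,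
`B H (n+1) = -1/(n+1)` and then `B (H²) (n+1) = H(n+1)/(n+1) - 2/(n+1)²`. On the right, the
convolution `∑ H⁽²⁾ m / (n-m)` increases by `∑ 1/((i+1)²(n-i))`, which partial fractions
evaluate. Both sides thus satisfy the same first-order recursion and vanish at `n = 0`.
-/

open Finset

def binomialTransform {R : Type*} [CommRing R] (f : ℕ → R) (n : ℕ) : R :=
  ∑ k ∈ range (n + 1), (-1) ^ k * n.choose k * f k

section CommRing

variable {R : Type*} [CommRing R]

theorem binomialTransform_add (f g : ℕ → R) (n : ℕ) :
    binomialTransform (fun k => f k + g k) n = binomialTransform f n + binomialTransform g n := by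
  simp only [binomialTransform, mul_add, sum_add_distrib]

theorem binomialTransform_sub (f g : ℕ → R) (n : ℕ) :
    binomialTransform (fun k => f k - g k) n = binomialTransform f n - binomialTransform g n := by
  simp only [binomialTransform, mul_sub, sum_sub_distrib]

theorem binomialTransform_const_mul (c : R) (f : ℕ → R) (n : ℕ) :
    binomialTransform (fun k => c * f k) n = c * binomialTransform f n := by
  simp only [binomialTransform, mul_sum, mul_left_comm c]

theorem binomialTransform_succ (f : ℕ → R) (n : ℕ) :
    binomialTransform f (n + 1) =
      binomialTransform f n - binomialTransform (fun k => f (k + 1)) n := by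
  have pascal (k : ℕ) : (-1) ^ (k + 1) * ((n + 1).choose (k + 1) : R) * f (k + 1) =
      (-1) ^ (k + 1) * n.choose (k + 1) * f (k + 1) - (-1) ^ k * n.choose k * f (k + 1) := by
    rw [Nat.choose_succ_succ]; push_cast; ring
  have split_first : binomialTransform f n =
      f 0 + ∑ k ∈ range (n + 1), (-1) ^ (k + 1) * (n.choose (k + 1) : R) * f (k + 1) := by
    rw [binomialTransform, sum_range_succ', sum_range_succ, Nat.choose_succ_self]
    simp [add_comm]
  rw [binomialTransform, sum_range_succ', split_first, binomialTransform]
  simp only [pascal, sum_sub_distrib, pow_zero, Nat.choose_zero_right, Nat.cast_one, one_mul]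
  abel

theorem binomialTransform_one_succ (n : ℕ) : binomialTransform (fun _ => (1 : R)) (n + 1) = 0 :=
  (binomialTransform_succ _ n).trans (sub_self _)

end CommRing

section Field

variable {K : Type*} [Field K] [CharZero K]

theorem binomialTransform_shift_div (f : ℕ → K) (n : ℕ) :
    binomialTransform (fun k => f (k + 1) / (k + 1)) n =
      (f 0 - binomialTransform f (n + 1)) / (n + 1) := by
  have absorb (k : ℕ) : (n.choose k : K) / (k + 1) = (n + 1).choose (k + 1) / (n + 1) := by
    rw [div_eq_div_iff (Nat.cast_add_one_ne_zero k) (Nat.cast_add_one_ne_zero n), mul_comm]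
    exact_mod_cast Nat.add_one_mul_choose_eq n k
  have h : f 0 - binomialTransform f (n + 1) =
      ∑ k ∈ range (n + 1), (-1) ^ k * ((n + 1).choose (k + 1) : K) * f (k + 1) := by
    simp [binomialTransform, sum_range_succ' _ (n + 1), pow_succ, ← sum_neg_distrib]
  rw [h, sum_div, binomialTransform]
  refine sum_congr rfl fun k _ => ?_
  rw [mul_div_right_comm _ (f _), mul_div_assoc, ← absorb]
  ring

theorem binomialTransform_inv_natCast_add_one (n : ℕ) :
    binomialTransform (fun k => ((k : K) + 1)⁻¹) n = ((n : K) + 1)⁻¹ := by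
  simpa [binomialTransform_one_succ, ← one_div] using
    binomialTransform_shift_div (fun _ => (1 : K)) n

end Field

/-- At `k = 0`, `k - 1` truncates to `0`, but the term vanishes on both sides since
`f 0 / 0 = 0`. -/
theorem sum_choose_mul_neg_one_pow_pred_div {K : Type*} [Field K] (f : ℕ → K) (n : ℕ) :
    ∑ k ∈ range (n + 1), (n.choose k : K) * (-1) ^ (k - 1) * f k / k =
      -binomialTransform (fun k => f k / k) n := by
  rw [binomialTransform, ← sum_neg_distrib]
  refine sum_congr rfl fun k _ => ?_
  cases k with
  | zero => simp
  | succ k => rw [Nat.add_sub_cancel, pow_succ]; ring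

theorem binomialTransform_inv_natCast (n : ℕ) :
    binomialTransform (fun k => (k : ℚ)⁻¹) n = -harmonic n := by
  induction n with
  | zero => simp [binomialTransform]
  | succ n ih =>
    rw [binomialTransform_succ, ih, harmonic_succ]
    push_cast
    rw [binomialTransform_inv_natCast_add_one]
    ring

theorem binomialTransform_harmonic_succ (n : ℕ) :
    binomialTransform harmonic (n + 1) = -(n + 1 : ℚ)⁻¹ := by
  simp only [binomialTransform_succ harmonic n, harmonic_succ, Nat.cast_add_one,
    binomialTransform_add, binomialTransform_inv_natCast_add_one, sub_add_cancel_left]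

theorem binomialTransform_harmonic_sq_succ (n : ℕ) :
    binomialTransform (fun k => harmonic k ^ 2) (n + 1) =
      harmonic (n + 1) / (n + 1) - 2 / (n + 1) ^ 2 := by
  have step (k : ℕ) : harmonic (k + 1) ^ 2 =
      harmonic k ^ 2 + (2 * harmonic (k + 1) - ((k + 1 : ℕ) : ℚ)⁻¹) / (k + 1) := by
    rw [harmonic_succ]
    push_cast
    field_simp
    ring
  rw [binomialTransform_succ, funext step, binomialTransform_add,
    binomialTransform_shift_div (fun k => 2 * harmonic k - (k : ℚ)⁻¹), binomialTransform_sub,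
    binomialTransform_const_mul, binomialTransform_harmonic_succ, binomialTransform_inv_natCast]
  simp only [harmonic_zero, Nat.cast_zero, inv_zero]
  field_simp
  ring

def harmonic₂ (n : ℕ) : ℚ := ∑ i ∈ range n, (↑(i + 1))⁻¹ ^ 2

@[simp]
theorem harmonic₂_zero : harmonic₂ 0 = 0 := rfl

theorem harmonic₂_succ (n : ℕ) : harmonic₂ (n + 1) = harmonic₂ n + (↑(n + 1))⁻¹ ^ 2 :=
  sum_range_succ _ n

theorem sum_range_inv_natCast_sub (n : ℕ) :
    ∑ i ∈ range n, ((n - i : ℕ) : ℚ)⁻¹ = harmonic n := by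
  rw [harmonic, ← sum_range_reflect]
  refine sum_congr rfl fun i hi => ?_
  have := mem_range.mp hi
  congr 2
  omega

theorem sum_range_inv_sq_div_natCast_sub (n : ℕ) :
    ∑ i ∈ range n, ((i + 1 : ℕ) : ℚ)⁻¹ ^ 2 / (n - i : ℕ) =
      harmonic₂ n / (n + 1) + 2 * harmonic n / (n + 1) ^ 2 := by
  have partial_fractions : ∀ i ∈ range n, (↑(i + 1))⁻¹ ^ 2 / (n - i : ℕ) =
      (↑(i + 1))⁻¹ ^ 2 / (n + 1) + (↑(i + 1))⁻¹ / (n + 1) ^ 2 +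
        ((n - i : ℕ) : ℚ)⁻¹ / (n + 1) ^ 2 := by
    intro i hi
    rw [mem_range] at hi
    have hni : (n : ℚ) - i ≠ 0 := sub_ne_zero.mpr (by exact_mod_cast hi.ne')
    rw [Nat.cast_sub hi.le]
    push_cast
    field_simp
    ring
  rw [sum_congr rfl partial_fractions, sum_add_distrib, sum_add_distrib, ← sum_div, ← sum_div,
    ← sum_div, sum_range_inv_natCast_sub, ← harmonic₂, ← harmonic]
  ring

theorem sum_range_harmonic₂_div_sub_succ (n : ℕ) :
    ∑ m ∈ range (n + 1), harmonic₂ m / (n + 1 - m : ℕ) =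
      ∑ m ∈ range n, harmonic₂ m / (n - m : ℕ) + harmonic₂ n / (n + 1) +
        2 * harmonic n / (n + 1) ^ 2 := by
  have term (m : ℕ) : harmonic₂ (m + 1) / (n + 1 - (m + 1) : ℕ) =
      harmonic₂ m / (n - m : ℕ) + (↑(m + 1))⁻¹ ^ 2 / (n - m : ℕ) := by
    rw [harmonic₂_succ, Nat.add_sub_add_right, add_div]
  rw [sum_range_succ', harmonic₂_zero, zero_div, add_zero]
  simp only [term, sum_add_distrib, sum_range_inv_sq_div_natCast_sub]
  ring

theorem binomialTransform_harmonic_sq_div_succ (n : ℕ) :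
    binomialTransform (fun k => harmonic k ^ 2 / k) (n + 1) =
      binomialTransform (fun k => harmonic k ^ 2 / k) n -
        (2 / (n + 1) ^ 2 - harmonic (n + 1) / (n + 1)) / (n + 1) := by
  have h := binomialTransform_shift_div (fun k => harmonic k ^ 2) n
  rw [binomialTransform_succ]
  push_cast at h ⊢
  rw [h, binomialTransform_harmonic_sq_succ, harmonic_zero]
  ring

theorem stmt_15_general (H H2 : ℕ → ℚ)
    (hH : ∀ n, H n = ∑ j ∈ Finset.range n, (1 : ℚ) / (j + 1))
    (hH2 : ∀ n, H2 n = ∑ j ∈ Finset.range n, (1 : ℚ) / ((j + 1) * (j + 1)))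
    (n : ℕ) :
    ∑ k ∈ Finset.range (n+1), (n.choose k : ℚ) * (-1 : ℚ)^(k - 1) * (H k)^2 / k =
      H n * H2 n - ∑ m ∈ Finset.range n, H2 m / (n - m : ℕ) := by
  obtain rfl : H = harmonic := funext fun n => by simp [hH, harmonic]
  obtain rfl : H2 = harmonic₂ := funext fun n => by simp [hH2, harmonic₂, sq]
  rw [sum_choose_mul_neg_one_pow_pred_div]
  induction n with
  | zero => simp [binomialTransform]
  | succ n ih =>
    rw [binomialTransform_harmonic_sq_div_succ, sum_range_harmonic₂_div_sub_succ,
      harmonic_succ, harmonic₂_succ]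
    push_cast
    linear_combination (norm := skip) ih
    field_simp
    ring

theorem stmt_15 (H H2 : ℕ → ℚ)
    (hH : ∀ n, H n = ∑ j ∈ Finset.range n, (1 : ℚ) / (j + 1))
    (hH2 : ∀ n, H2 n = ∑ j ∈ Finset.range n, (1 : ℚ) / ((j + 1) * (j + 1)))
    (n : ℕ) (hn : 1 ≤ n) :
    ∑ k ∈ Finset.range (n+1), (n.choose k : ℚ) * (-1 : ℚ)^(k - 1) * (H k)^2 / k =
      H n * H2 n - ∑ m ∈ Finset.range n, H2 m / (n - m : ℕ) :=
  stmt_15_general H H2 hH hH2 n
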